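/- Completeness of the Down-based traversal: with states defined as X_{root(T)} = Down({root(P)}, root(T)) and X_z = Down(X_y, z) for z a child of y, for every node y of T and every pseudo-leaf ⊥ of P (a node whose label β occurs nowhere in T), ⊥ ∈ X_y if and only if the label sequence of path(parent(⊥)) is a subsequence of the label sequence of path(y). -/
import Mathlib


open Finset
open scoped Classical

/-- A rooted tree on `n` nodes given by a parent function. -/
structure RTree (n : ℕ) where
  parent : Fin n → Fin n
  root : Fin n
  parent_root : parent root = root
  wf : ∀ v, ∃ k, parent^[k] v = root

namespace RTree

variable {n : ℕ}

/-- `x` is an ancestor of `v` (possibly `x = v`). -/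
def Anc (T : RTree n) (x v : Fin n) : Prop := ∃ k, T.parent^[k] v = x

/-- `z` is a child of `y`. -/
def IsChild (T : RTree n) (z y : Fin n) : Prop := T.parent z = y ∧ z ≠ y

/-- The number of nodes in the subtree rooted at `y`. -/
noncomputable def size (T : RTree n) (y : Fin n) : ℕ :=
  (Finset.univ.filter fun v => T.Anc y v).card

/-- A leaf is a node with no children. -/
def IsLeaf (T : RTree n) (v : Fin n) : Prop := ∀ z, T.parent z = v → z = v

noncomputable def leaves (T : RTree n) : Finset (Fin n) :=
  Finset.univ.filter fun v => T.IsLeaf v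

noncomputable def depth (T : RTree n) (v : Fin n) : ℕ := Nat.find (T.wf v)

/-- The list of labels on the path from the root down to `v`. -/
noncomputable def pathLabels {α : Type*} (T : RTree n) (lab : Fin n → α) (v : Fin n) :
    List α :=
  (List.range (T.depth v + 1)).map fun i => lab (T.parent^[T.depth v - i] v)

/-- The number of light edges on the root-to-`y` path (`hv x = true` iff `x` is heavy). -/
noncomputable def lightdepth (T : RTree n) (hv : Fin n → Bool) (y : Fin n) : ℕ :=
  (Finset.univ.filter fun x => T.Anc x y ∧ x ≠ T.root ∧ hv x = false).card


lemma parent_eq_self_iff (T : RTree n) (v : Fin n) : T.parent v = v ↔ v = T.root := by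
  constructor
  · intro h
    obtain ⟨k, hk⟩ := T.wf v
    have hfix : ∀ k, T.parent^[k] v = v := by
      intro k
      induction k with
      | zero => rfl
      | succ k ih => rw [Function.iterate_succ_apply, h, ih]
    rw [hfix k] at hk; exact hk
  · intro h; subst h; exact T.parent_root

lemma depth_root (T : RTree n) : T.depth T.root = 0 :=
  Nat.le_zero.mp (Nat.find_le (by simp : T.parent^[0] T.root = T.root))

lemma depth_parent (T : RTree n) (y : Fin n) (hy : y ≠ T.root) :
    T.depth y = T.depth (T.parent y) + 1 := by
  have h0 : T.depth y ≠ 0 := by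
    intro h
    have hs : T.parent^[T.depth y] y = T.root := Nat.find_spec (T.wf y)
    rw [h] at hs; exact hy hs
  obtain ⟨d, hd⟩ := Nat.exists_eq_succ_of_ne_zero h0
  have hspec : T.parent^[T.depth y] y = T.root := Nat.find_spec (T.wf y)
  rw [hd, Function.iterate_succ_apply] at hspec
  have h1 : T.depth (T.parent y) ≤ d := Nat.find_le hspec
  have h3 : T.depth y ≤ T.depth (T.parent y) + 1 :=
    Nat.find_le (by rw [Function.iterate_succ_apply]; exact Nat.find_spec (T.wf (T.parent y)))
  omega

lemma pathLabels_root {α : Type*} (T : RTree n) (lab : Fin n → α) :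
    T.pathLabels lab T.root = [lab T.root] := by
  unfold pathLabels
  rw [depth_root]
  simp [List.range_succ]

lemma pathLabels_length {α : Type*} (T : RTree n) (lab : Fin n → α) (v : Fin n) :
    (T.pathLabels lab v).length = T.depth v + 1 := by
  simp [pathLabels]

lemma pathLabels_step {α : Type*} (T : RTree n) (lab : Fin n → α) (y : Fin n)
    (hy : y ≠ T.root) :
    T.pathLabels lab y = T.pathLabels lab (T.parent y) ++ [lab y] := by
  unfold pathLabels
  rw [depth_parent T y hy]
  set d := T.depth (T.parent y) with hdd
  rw [show d + 1 + 1 = (d + 1) + 1 from rfl, List.range_succ, List.map_append]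
  congr 1
  · apply List.map_congr_left
    intro i hi
    have : i < d + 1 := List.mem_range.mp hi
    rw [show d + 1 - i = (d - i) + 1 by omega, Function.iterate_succ_apply]
  · simp


end RTree


lemma sublist_concat_iff {α : Type*} {L M : List α} {a : α} :
    L.Sublist (M ++ [a]) ↔ L.Sublist M ∨ ∃ L', L = L' ++ [a] ∧ L'.Sublist M := by
  constructor
  · intro h
    rcases List.sublist_append_iff.mp h with ⟨l1, l2, heq, h1, h2⟩
    rcases List.sublist_singleton.mp h2 with rfl | rfl
    · left; rw [heq, List.append_nil]; exact h1
    · right; exact ⟨l1, heq, h1⟩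
  · rintro (h | ⟨L', rfl, h⟩)
    · exact h.trans (List.sublist_append_left _ _)
    · exact h.append (List.Sublist.refl _)

lemma concat_sublist_concat_iff {α : Type*} {Q M : List α} {b a : α} :
    (Q ++ [b]).Sublist (M ++ [a]) ↔ (Q ++ [b]).Sublist M ∨ (b = a ∧ Q.Sublist M) := by
  rw [sublist_concat_iff]
  apply or_congr Iff.rfl
  constructor
  · rintro ⟨L', heq, hL⟩
    obtain ⟨rfl, hba⟩ := List.append_inj' heq rfl
    exact ⟨List.singleton_injective hba, hL⟩
  · rintro ⟨rfl, hQ⟩; exact ⟨Q, rfl, hQ⟩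

lemma singleton_sublist_concat_iff {α : Type*} {M : List α} {b a : α} :
    [b].Sublist (M ++ [a]) ↔ [b].Sublist M ∨ b = a := by
  have := concat_sublist_concat_iff (Q := ([] : List α)) (M := M) (b := b) (a := a)
  simpa using this

/-- The `Down` procedure: children of matched nodes together with unmatched nodes. -/
def Down {m : ℕ} {α : Type*} (P : RTree m) (lab : Fin m → α) (X : Set (Fin m)) (a : α) :
    Set (Fin m) :=
  {z | ∃ x ∈ X, lab x = a ∧ P.IsChild z x} ∪ {x ∈ X | lab x ≠ a}


lemma RTree.depth_eq_zero_iff {n : ℕ} (T : RTree n) (v : Fin n) :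
    T.depth v = 0 ↔ v = T.root := by
  constructor
  · intro h
    have h2 : T.parent^[T.depth v] v = T.root := Nat.find_spec (T.wf v)
    rw [h] at h2; exact h2
  · intro h; subst h; exact depth_root T

lemma down_mem {m : ℕ} {α : Type*} (P : RTree m) (lp : Fin m → α)
    (S : Set (Fin m)) (a : α) (x : Fin m) :
    x ∈ Down P lp S a ↔
      ((P.parent x ∈ S ∧ lp (P.parent x) = a ∧ x ≠ P.root) ∨ (x ∈ S ∧ lp x ≠ a)) := by
  simp only [Down, Set.mem_union, Set.mem_setOf_eq, RTree.IsChild]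
  constructor
  · rintro (⟨u, hu, hl, rfl, hne⟩ | h)
    · exact Or.inl ⟨hu, hl, fun hx => hne (by rw [hx, P.parent_root])⟩
    · exact Or.inr h
  · rintro (⟨hu, hl, hx⟩ | h)
    · exact Or.inl ⟨P.parent x, hu, hl, rfl,
        fun hxp => hx ((P.parent_eq_self_iff x).mp hxp.symm)⟩
    · exact Or.inr h


lemma logicA {Mx Mp p q e f XR : Prop} (hXR : ¬XR)
    (hx : Mx ↔ (XR ∨ p) ∧ ¬q) (hp : Mp ↔ (True ∨ p) ∧ ¬p) (hqp : q → p) :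
    ((Mp ∧ e ∧ ¬XR) ∨ (Mx ∧ ¬f)) ↔ ((XR ∨ (p ∨ e)) ∧ ¬(q ∨ (f ∧ p))) := by
  tauto

lemma logicB {Mx Mp p q r e f XR PR : Prop} (hXR : ¬XR) (hPR : ¬PR)
    (hx : Mx ↔ (XR ∨ p) ∧ ¬q) (hp : Mp ↔ (PR ∨ r) ∧ ¬p)
    (hqp : q → p) (hpr : p → r) :
    ((Mp ∧ e ∧ ¬XR) ∨ (Mx ∧ ¬f)) ↔ ((XR ∨ (p ∨ (e ∧ r))) ∧ ¬(q ∨ (f ∧ p))) := by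
  tauto

lemma down_gen (m n : ℕ) {α : Type*} (P : RTree m) (T : RTree n)
    (lp : Fin m → α) (lt : Fin n → α) (X : Fin n → Set (Fin m))
    (hroot : X T.root = Down P lp {P.root} (lt T.root))
    (hstep : ∀ z, z ≠ T.root → X z = Down P lp (X (T.parent z)) (lt z)) :
    ∀ y x, x ∈ X y ↔
      ((x = P.root ∨ (P.pathLabels lp (P.parent x)).Sublist (T.pathLabels lt y)) ∧
        ¬ (P.pathLabels lp x).Sublist (T.pathLabels lt y)) := by
  suffices main : ∀ d y, T.depth y = d → ∀ x, x ∈ X y ↔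
      ((x = P.root ∨ (P.pathLabels lp (P.parent x)).Sublist (T.pathLabels lt y)) ∧
        ¬ (P.pathLabels lp x).Sublist (T.pathLabels lt y)) by
    intro y x; exact main (T.depth y) y rfl x
  intro d
  induction d using Nat.strong_induction_on with
  | _ d IH =>
    intro y hd x
    by_cases hy : y = T.root
    · subst hy
      rw [hroot, down_mem, T.pathLabels_root lt]
      by_cases hx : x = P.root
      · subst hx
        simp [P.parent_root, P.pathLabels_root lp, List.sublist_singleton,
          Set.mem_singleton_iff]
      · have hlen : ∀ v : Fin m, v ≠ P.root →
            ¬ (P.pathLabels lp v).Sublist [lt T.root] := by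
          intro v hv h
          have h2 := h.length_le
          rw [RTree.pathLabels_length] at h2
          simp only [List.length_singleton] at h2
          exact hv ((P.depth_eq_zero_iff v).mp (by omega))
        by_cases hpx : P.parent x = P.root
        · have hl1 : ¬ (P.pathLabels lp x).Sublist [lt T.root] := hlen x hx
          simp only [Set.mem_singleton_iff, hpx, hx, hl1]
          rw [P.pathLabels_root lp]
          simp [List.sublist_singleton, hx]
        · have hl1 : ¬ (P.pathLabels lp x).Sublist [lt T.root] := hlen x hx
          have hl2 : ¬ (P.pathLabels lp (P.parent x)).Sublist [lt T.root] := hlen _ hpx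
          simp only [Set.mem_singleton_iff, hpx, hx, hl1, hl2]
          tauto
    · -- inductive step
      have hdp : T.depth y = T.depth (T.parent y) + 1 := T.depth_parent y hy
      have IHw := IH (T.depth (T.parent y)) (by omega) (T.parent y) rfl
      rw [hstep y hy, down_mem, T.pathLabels_step lt y hy]
      obtain ⟨A, hA⟩ : ∃ L, T.pathLabels lt (T.parent y) = L := ⟨_, rfl⟩
      rw [hA]
      by_cases hx : x = P.root
      · subst hx
        have h1 := IHw P.root
        rw [hA] at h1
        simp only [P.parent_root, P.pathLabels_root lp, true_or, true_and] at h1 ⊢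
        rw [singleton_sublist_concat_iff]
        clear hroot hstep IH IHw hd hdp hA
        tauto
      · by_cases hpx : P.parent x = P.root
        · have hxIH := IHw x
          have hpIH := IHw P.root
          have hPPx : P.pathLabels lp x = [lp P.root] ++ [lp x] := by
            rw [P.pathLabels_step lp x hx, hpx, P.pathLabels_root lp]
          have hPPp : P.pathLabels lp (P.parent x) = [lp P.root] := by
            rw [hpx, P.pathLabels_root lp]
          rw [hA] at hxIH hpIH
          rw [hPPx, hPPp] at hxIH ⊢
          rw [hpx]
          simp only [P.parent_root, P.pathLabels_root lp] at hpIH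
          rw [singleton_sublist_concat_iff, concat_sublist_concat_iff]
          have hqp : ([lp P.root] ++ [lp x]).Sublist A → [lp P.root].Sublist A :=
            fun h => (List.sublist_append_left _ _).trans h
          exact logicA hx hxIH hpIH hqp
        · have hxIH := IHw x
          have hpIH := IHw (P.parent x)
          have hPPx : P.pathLabels lp x =
              P.pathLabels lp (P.parent x) ++ [lp x] := P.pathLabels_step lp x hx
          have hPPp : P.pathLabels lp (P.parent x) =
              P.pathLabels lp (P.parent (P.parent x)) ++ [lp (P.parent x)] :=
            P.pathLabels_step lp (P.parent x) hpx
          obtain ⟨L, hL⟩ : ∃ L, P.pathLabels lp (P.parent (P.parent x)) = L := ⟨_, rfl⟩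
          rw [hA] at hxIH hpIH
          rw [hPPx] at hxIH ⊢
          rw [hPPp] at hxIH hpIH ⊢
          rw [hL] at hxIH hpIH ⊢
          rw [concat_sublist_concat_iff, concat_sublist_concat_iff]
          have hqp : ((L ++ [lp (P.parent x)]) ++ [lp x]).Sublist A →
              (L ++ [lp (P.parent x)]).Sublist A :=
            fun h => (List.sublist_append_left _ _).trans h
          have hpr : (L ++ [lp (P.parent x)]).Sublist A → L.Sublist A :=
            fun h => (List.sublist_append_left _ _).trans h
          exact logicB hx hpx hxIH hpIH hqp hpr

/-- Completeness of the `Down`-based traversal (Lemma 2): for a pseudo-leaf `bot` of `P`,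
whose label occurs nowhere in `T`, `bot` is in the state at `y` iff the label sequence of
the path to `bot`'s parent is a subsequence of the label sequence of the path to `y`. -/
theorem down_traversal_complete (m n : ℕ) {α : Type*} (P : RTree m) (T : RTree n)
    (lp : Fin m → α) (lt : Fin n → α) (X : Fin n → Set (Fin m))
    (hroot : X T.root = Down P lp {P.root} (lt T.root))
    (hstep : ∀ z, z ≠ T.root → X z = Down P lp (X (T.parent z)) (lt z))
    (bot : Fin m) (hbot : bot ≠ P.root)
    (hfresh : ∀ y : Fin n, lt y ≠ lp bot)
    (y : Fin n) :
    bot ∈ X y ↔ (P.pathLabels lp (P.parent bot)).Sublist (T.pathLabels lt y) := by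
  have hgen := down_gen m n P T lp lt X hroot hstep y bot
  have hnb : ¬ (P.pathLabels lp bot).Sublist (T.pathLabels lt y) := by
    intro h
    have hmem : lp bot ∈ P.pathLabels lp bot := by
      rw [P.pathLabels_step lp bot hbot]
      simp
    have hmem2 := h.mem hmem
    unfold RTree.pathLabels at hmem2
    rcases List.mem_map.mp hmem2 with ⟨i, _, hi⟩
    exact hfresh _ hi
  rw [hgen]
  constructor
  · rintro ⟨h1 | h1, _⟩
    · exact absurd h1 hbot
    · exact h1
  · intro h
    exact ⟨Or.inr h, hnb⟩
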